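/- arXiv:1504.02229 — 4 statements merged into one kernel-verified Lean document; each statement's English description precedes it below -/
import Mathlib

section
/- The function ℓ_2(t) = −3 e^{5t} + e^{15t} + 2 cos(5√3 t) satisfies ℓ_2(0)=ℓ_2'(0)=ℓ_2''(0)=0 and ℓ_2'''(t)>0 for all t∈[0,1]; consequently ℓ_2(t)>0 for all t∈(0,1]. -/
/-!
`ℓ₂` lies in the span of `e^{5t}, e^{15t}, cos(5√3 t), sin(5√3 t)`, which is closed under
differentiation, so its first three derivatives are explicit: `ℓ₂, ℓ₂', ℓ₂''` vanish at `0` and the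
third is positive for `t ≥ 0` because `e^{15t}` dominates. Integrating three times from `0`, each
of `ℓ₂''`, `ℓ₂'`, `ℓ₂` is strictly increasing on `[0, ∞)` from the value `0`, hence positive.
-/

open Real Set

theorem pos_of_deriv_pos_of_eq_zero {f : ℝ → ℝ} {a : ℝ} (hf : Differentiable ℝ f) (ha : f a = 0)
    (hf' : ∀ t ∈ Ioi a, 0 < deriv f t) {t : ℝ} (ht : t ∈ Ioi a) : 0 < f t :=
  ha ▸ strictMonoOn_of_deriv_pos (convex_Ici a) hf.continuous.continuousOn
    (by rwa [interior_Ici]) self_mem_Ici (mem_Ioi.1 ht).le ht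

theorem pos_of_iteratedDeriv_pos_of_vanishing {a : ℝ} (n : ℕ) {f : ℝ → ℝ} (hf : ContDiff ℝ n f)
    (hvan : ∀ k < n, iteratedDeriv k f a = 0) (hpos : ∀ t ∈ Ioi a, 0 < iteratedDeriv n f t)
    {t : ℝ} (ht : t ∈ Ioi a) : 0 < f t := by
  induction n generalizing f t with
  | zero => simpa using hpos t ht
  | succ n ih =>
    rw [Nat.cast_add_one, contDiff_succ_iff_deriv] at hf
    refine pos_of_deriv_pos_of_eq_zero hf.1 (by simpa using hvan 0 n.succ_pos) (fun s hs => ?_) ht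
    refine ih hf.2.2 (fun k hk => ?_) (fun s hs => ?_) hs
    · rw [← iteratedDeriv_succ']; exact hvan (k + 1) (by omega)
    · rw [← iteratedDeriv_succ']; exact hpos s hs

section ExpTrig

variable (p q ω : ℝ)

noncomputable def expTrig (a b c d : ℝ) (t : ℝ) : ℝ :=
  a * exp (p * t) + b * exp (q * t) + c * cos (ω * t) + d * sin (ω * t)

theorem hasDerivAt_expTrig (a b c d t : ℝ) :
    HasDerivAt (expTrig p q ω a b c d) (expTrig p q ω (p * a) (q * b) (ω * d) (-(ω * c)) t) t := by
  have hlin (r : ℝ) : HasDerivAt (fun t => r * t) r t := by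
    simpa using (hasDerivAt_id t).const_mul r
  exact ((((hlin p).exp.const_mul a).add ((hlin q).exp.const_mul b)).add
    ((hlin ω).cos.const_mul c)).add ((hlin ω).sin.const_mul d) |>.congr_deriv (by
      simp only [expTrig]; ring)

theorem deriv_expTrig (a b c d : ℝ) :
    deriv (expTrig p q ω a b c d) = expTrig p q ω (p * a) (q * b) (ω * d) (-(ω * c)) :=
  funext fun t => (hasDerivAt_expTrig p q ω a b c d t).deriv

theorem contDiff_expTrig (a b c d : ℝ) {n : WithTop ℕ∞} :
    ContDiff ℝ n (expTrig p q ω a b c d) := by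
  unfold expTrig; fun_prop

end ExpTrig

local notation "ℓ₂" => expTrig 5 15 (5 * √3) (-3) 1 2 0

theorem sqrt_three_mul_self : √3 * √3 = 3 := mul_self_sqrt (by norm_num)

theorem iteratedDeriv_ell_two_eq_zero {k : ℕ} (hk : k < 3) : iteratedDeriv k ℓ₂ 0 = 0 := by
  interval_cases k
  · norm_num [expTrig]
  · norm_num [deriv_expTrig, expTrig]
  · norm_num [iteratedDeriv_succ, deriv_expTrig, expTrig]
    linear_combination (-50) * sqrt_three_mul_self

theorem iteratedDeriv_three_ell_two :
    iteratedDeriv 3 ℓ₂ = expTrig 5 15 (5 * √3) (-375) 3375 0 (750 * √3) := by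
  simp only [iteratedDeriv_succ, iteratedDeriv_zero, deriv_expTrig]
  congr 1
  · norm_num
  · norm_num
  · ring
  · linear_combination (250 * √3) * sqrt_three_mul_self

-- `3375 e^{15t} - 375 e^{5t} ≥ 3000 > 750 √3 ≥ -750 √3 sin(5√3 t)` for `t ≥ 0`.
theorem iteratedDeriv_three_ell_two_pos {t : ℝ} (ht : 0 ≤ t) : 0 < iteratedDeriv 3 ℓ₂ t := by
  have h5 : 1 ≤ exp (5 * t) := one_le_exp (by linarith)
  have h15 : exp (5 * t) ≤ exp (15 * t) := exp_le_exp.2 (by linarith)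
  have hsin := neg_one_le_sin (5 * √3 * t)
  have hsqrt : √3 < 2 := by
    rw [sqrt_lt' two_pos]; norm_num
  rw [iteratedDeriv_three_ell_two, expTrig]
  nlinarith [mul_le_mul_of_nonneg_left hsin (sqrt_nonneg 3)]

/-- `ℓ₂(t) = −3e^{5t} + e^{15t} + 2cos(5√3 t)` vanishes to order 3 at 0,
has positive third derivative on `[0,1]`, and hence is positive on `(0,1]`. -/
theorem stmt_6 :
    let l : ℝ → ℝ := fun t => -3 * exp (5 * t) + exp (15 * t) + 2 * cos (5 * Real.sqrt 3 * t)
    l 0 = 0 ∧ deriv l 0 = 0 ∧ iteratedDeriv 2 l 0 = 0 ∧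
    (∀ t ∈ Icc (0 : ℝ) 1, 0 < iteratedDeriv 3 l t) ∧
    (∀ t ∈ Ioc (0 : ℝ) 1, 0 < l t) := by
  intro l
  have hl : l = ℓ₂ := by
    ext t; simp [l, expTrig]
  rw [hl]
  refine ⟨iteratedDeriv_ell_two_eq_zero (k := 0) (by norm_num),
    by simpa using iteratedDeriv_ell_two_eq_zero (k := 1) (by norm_num),
    iteratedDeriv_ell_two_eq_zero (by norm_num),
    fun t ht => iteratedDeriv_three_ell_two_pos ht.1, fun t ht => ?_⟩
  exact pos_of_iteratedDeriv_pos_of_vanishing 3 (contDiff_expTrig _ _ _ _ _ _ _)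
    (fun k hk => iteratedDeriv_ell_two_eq_zero hk)
    (fun s hs => iteratedDeriv_three_ell_two_pos (le_of_lt hs)) ht.1
end

section
/- For all s ∈ [0,1], 2 e^{15 s} cos(5√3 (s−1)) + e^{15} > 0. -/
open Real Set

/-- For all `s ∈ [0,1]`, `2 e^{15s} cos(5√3(s−1)) + e^{15} > 0`. -/
theorem stmt_7 :
    ∀ s ∈ Icc (0 : ℝ) 1,
      0 < 2 * exp (15 * s) * cos (5 * Real.sqrt 3 * (s - 1)) + exp 15 := by
  intro s hs
  obtain ⟨h0, h1⟩ := hs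
  have hE : 0 < exp (15 * s) := exp_pos _
  have hs3 : Real.sqrt 3 < 2 := by
    nlinarith [Real.sq_sqrt (by norm_num : (3:ℝ) ≥ 0), Real.sqrt_nonneg 3]
  have hs3' : 0 ≤ Real.sqrt 3 := Real.sqrt_nonneg 3
  rcases lt_or_ge (1 - s) (1/15) with h | h
  · -- cos is nonneg
    have hpi : (3:ℝ) < π := Real.pi_gt_three
    have hcos : 0 ≤ cos (5 * Real.sqrt 3 * (s - 1)) := by
      apply Real.cos_nonneg_of_mem_Icc
      constructor
      · nlinarith
      · nlinarith
    nlinarith [exp_pos (15:ℝ)]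
  · have hle : (1:ℝ) ≤ 15 * (1 - s) := by linarith
    have he1 : (2:ℝ) < exp 1 := by
      have := Real.exp_one_gt_d9
      linarith
    have he2 : exp 1 ≤ exp (15 * (1 - s)) := exp_le_exp.mpr hle
    have hsplit : exp 15 = exp (15 * s) * exp (15 * (1 - s)) := by
      rw [← Real.exp_add]; ring_nf
    have hc : -1 ≤ cos (5 * Real.sqrt 3 * (s - 1)) := neg_one_le_cos _
    nlinarith
end

section
/- For M < π², every function u ∈ C²([0,1]) with u(0)=u(1)=0 and u''(t) + M u(t) ≥ 0 for all t ∈ [0,1] satisfies u(t) ≤ 0 on [0,1]. (Inverse negativity of u'' + M u with Dirichlet conditions for M < π².) -/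
/-!
Compare `u` with the positive strict supersolution `φ t = sin (μ t + δ)`, where `M < μ² < π²` and
`δ > 0` is small enough that `μ t + δ ∈ (0, π)` on `[0, 1]`, so `φ'' + M φ = (M - μ²) φ < 0`.
If `u` were positive somewhere, the maximum `c` of `u / φ` on `[0, 1]` would be positive and,
since `u` vanishes at the endpoints, attained at an interior point `t₀`. Then `u - c φ` has a
local maximum `0` at `t₀`, so `u''(t₀) ≤ c φ''(t₀)` and `u'' + M u ≤ c (φ'' + M φ) < 0` at `t₀`.
-/

open Real Set Filter Topology

theorem IsLocalMax.deriv_deriv_nonpos {f : ℝ → ℝ} {x : ℝ} (h : IsLocalMax f x)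
    (hc : ContinuousAt f x) : deriv (deriv f) x ≤ 0 := by
  by_contra! hpos
  have hmin : IsLocalMin f x := isLocalMin_of_deriv_deriv_pos hpos h.deriv_eq_zero hc
  have hconst : f =ᶠ[𝓝 x] fun _ => f x := (h.and hmin).mono fun _ hy => le_antisymm hy.1 hy.2
  have hderiv : deriv f =ᶠ[𝓝 x] fun _ => 0 := by
    filter_upwards [hconst.eventuallyEq_nhds] with y hy
    rw [hy.deriv_eq, deriv_const]
  rw [hderiv.deriv_eq, deriv_const] at hpos
  exact hpos.false

theorem deriv_deriv_sub_const_mul {f g : ℝ → ℝ} {s : Set ℝ} {x : ℝ} (hs : IsOpen s) (hx : x ∈ s)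
    (hf : ContDiffOn ℝ 2 f s) (hg : ContDiffOn ℝ 2 g s) (c : ℝ) :
    deriv (deriv fun t => f t - c * g t) x = deriv (deriv f) x - c * deriv (deriv g) x := by
  have hlin {F G : ℝ → ℝ} {y : ℝ} (hF : DifferentiableAt ℝ F y) (hG : DifferentiableAt ℝ G y) :
      deriv (fun t => F t - c * G t) y = deriv F y - c * deriv G y :=
    (hF.hasDerivAt.sub (hG.hasDerivAt.const_mul c)).deriv
  have h1 : (1 : WithTop ℕ∞) + 1 ≤ 2 := by norm_num
  have hf' := (hf.deriv_of_isOpen hs h1).differentiableOn one_ne_zero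
  have hg' := (hg.deriv_of_isOpen hs h1).differentiableOn one_ne_zero
  have hderiv : deriv (fun t => f t - c * g t) =ᶠ[𝓝 x] fun t => deriv f t - c * deriv g t := by
    filter_upwards [hs.mem_nhds hx] with y hy
    exact hlin ((hf.differentiableOn two_ne_zero).differentiableAt (hs.mem_nhds hy))
      ((hg.differentiableOn two_ne_zero).differentiableAt (hs.mem_nhds hy))
  rw [hderiv.deriv_eq]
  exact hlin (hf'.differentiableAt (hs.mem_nhds hx)) (hg'.differentiableAt (hs.mem_nhds hx))

theorem nonpos_of_subsolution_of_pos_supersolution {a b : ℝ} {q u φ : ℝ → ℝ}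
    (hu : ContinuousOn u (Icc a b)) (hφ : ContinuousOn φ (Icc a b))
    (hu₂ : ContDiffOn ℝ 2 u (Ioo a b)) (hφ₂ : ContDiffOn ℝ 2 φ (Ioo a b))
    (ha : u a ≤ 0) (hb : u b ≤ 0) (hφ_pos : ∀ t ∈ Icc a b, 0 < φ t)
    (hsub : ∀ t ∈ Ioo a b, 0 ≤ deriv (deriv u) t + q t * u t)
    (hsuper : ∀ t ∈ Ioo a b, deriv (deriv φ) t + q t * φ t < 0) :
    ∀ t ∈ Icc a b, u t ≤ 0 := by
  by_contra! ⟨s, hs, hus⟩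
  obtain ⟨t₀, ht₀, hmax⟩ := isCompact_Icc.exists_isMaxOn ⟨s, hs⟩
    (hu.div hφ fun t ht => (hφ_pos t ht).ne')
  set c := u t₀ / φ t₀
  have hc : 0 < c := (div_pos hus (hφ_pos s hs)).trans_le (hmax hs)
  have hut₀ : u t₀ = c * φ t₀ := (div_mul_cancel₀ _ (hφ_pos t₀ ht₀).ne').symm
  have hend {e : ℝ} (he : e ∈ Icc a b) (hue : u e ≤ 0) : t₀ ≠ e := by
    rintro rfl
    exact hc.not_ge (div_nonpos_of_nonpos_of_nonneg hue (hφ_pos _ he).le)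
  have ht₀' : t₀ ∈ Ioo a b :=
    ⟨ht₀.1.lt_of_ne (hend (left_mem_Icc.2 (hs.1.trans hs.2)) ha).symm,
      ht₀.2.lt_of_ne (hend (right_mem_Icc.2 (hs.1.trans hs.2)) hb)⟩
  have hle : ∀ t ∈ Icc a b, u t - c * φ t ≤ u t₀ - c * φ t₀ := fun t ht => by
    have : u t ≤ c * φ t := (div_le_iff₀ (hφ_pos t ht)).1 (hmax ht)
    linarith
  have hlocmax : IsLocalMax (fun t => u t - c * φ t) t₀ :=
    mem_of_superset (Icc_mem_nhds ht₀'.1 ht₀'.2) hle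
  have hcont : ContinuousAt (fun t => u t - c * φ t) t₀ :=
    (hu₂.sub (hφ₂.const_smul c)).continuousOn.continuousAt (Ioo_mem_nhds ht₀'.1 ht₀'.2)
  have hsecond := hlocmax.deriv_deriv_nonpos hcont
  rw [deriv_deriv_sub_const_mul isOpen_Ioo ht₀' hu₂ hφ₂] at hsecond
  have hneg := mul_neg_of_pos_of_neg hc (hsuper t₀ ht₀')
  have hnonneg := hsub t₀ ht₀'
  rw [hut₀] at hnonneg
  linarith

theorem exists_pos_lt_pi_sq_lt {M : ℝ} (hM : M < π ^ 2) : ∃ μ, 0 < μ ∧ μ < π ∧ M < μ ^ 2 := by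
  obtain ⟨a, hMa, haπ⟩ := exists_between (max_lt hM (by positivity) : max M 0 < π ^ 2)
  have ha : 0 < a := (le_max_right M 0).trans_lt hMa
  refine ⟨√a, sqrt_pos.2 ha, (sqrt_lt' pi_pos).2 haπ, ?_⟩
  rw [sq_sqrt ha.le]
  exact (le_max_left M 0).trans_lt hMa

theorem deriv_deriv_sin_mul_add (μ δ t : ℝ) :
    deriv (deriv fun t => sin (μ * t + δ)) t = -μ ^ 2 * sin (μ * t + δ) := by
  have hlin (t : ℝ) : HasDerivAt (fun t => μ * t + δ) μ t := by
    simpa using ((hasDerivAt_id t).const_mul μ).add_const δ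
  have hderiv : deriv (fun t => sin (μ * t + δ)) = fun t => μ * cos (μ * t + δ) :=
    funext fun t => (hlin t).sin.deriv.trans (mul_comm _ _)
  rw [hderiv, ((hlin t).cos.const_mul μ).deriv]
  ring

/-- Inverse negativity of `u'' + M u` with Dirichlet conditions for `M < π²`. -/
theorem stmt_13 (M : ℝ) (hM : M < π ^ 2) (u : ℝ → ℝ)
    (hu : ContDiffOn ℝ 2 u (Icc 0 1)) (h0 : u 0 = 0) (h1 : u 1 = 0)
    (hpos : ∀ t ∈ Icc (0 : ℝ) 1, 0 ≤ iteratedDerivWithin 2 u (Icc 0 1) t + M * u t) :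
    ∀ t ∈ Icc (0 : ℝ) 1, u t ≤ 0 := by
  obtain ⟨μ, hμ₀, hμπ, hMμ⟩ := exists_pos_lt_pi_sq_lt hM
  set δ := (π - μ) / 2 with hδ
  have hφ_pos : ∀ t ∈ Icc (0 : ℝ) 1, 0 < sin (μ * t + δ) := fun t ht =>
    sin_pos_of_pos_of_lt_pi (by nlinarith [ht.1]) (by nlinarith [ht.2])
  have hφ : ContDiff ℝ 2 fun t => sin (μ * t + δ) := by fun_prop
  refine nonpos_of_subsolution_of_pos_supersolution (q := fun _ => M) hu.continuousOn
    hφ.continuous.continuousOn (hu.mono Ioo_subset_Icc_self) hφ.contDiffOn h0.le h1.le hφ_pos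
    (fun t ht => ?_) (fun t ht => ?_)
  · have hut : ContDiffAt ℝ 2 u t := hu.contDiffAt (Icc_mem_nhds ht.1 ht.2)
    have := hpos t (Ioo_subset_Icc_self ht)
    rwa [iteratedDerivWithin_eq_iteratedDeriv (uniqueDiffOn_Icc zero_lt_one) hut
      (Ioo_subset_Icc_self ht), iteratedDeriv_eq_iterate] at this
  · rw [deriv_deriv_sin_mul_add]
    nlinarith [hφ_pos t (Ioo_subset_Icc_self ht)]
end

section
/- Let f : [a,b] → ℝ be differentiable with f' (t) = c(t) h(t) where c(t) > 0 is continuous and h has at most m zeros in [a,b] counted with multiplicity and changes sign at most m times. Then f has at most m+1 zeros in [a,b] counted with multiplicity. -/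
/-!
Order the zeros of `f` as `x₀ < ⋯ < xₖ`. By Rolle, each gap `(xᵢ, xᵢ₊₁)` contains a zero
of `f' = c h`, hence of `h` since `c > 0`; these `k` zeros are distinct and are not zeros
of `f`. A double zero of `f` is itself a zero of `h`. So `h` has at least
`k + #(double zeros)` zeros, and the multiplicity count `k + 1 + #(double zeros)` is at
most `m + 1`.
-/

open Set

theorem Finset.card_le_encard_sdiff_add_one {α : Type*} [LinearOrder α] (S : Finset α)
    (Y : Set α) (hgap : ∀ x ∈ S, ∀ y ∈ S, x < y → ∃ z ∈ Y, x < z ∧ z < y) :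
    (S.card : ℕ∞) ≤ (Y \ S).encard + 1 := by
  rcases hk : S.card with _ | k
  · simp
  set e := S.orderEmbOfFin hk
  have hgap' (i : Fin k) : ∃ z ∈ Y, e i.castSucc < z ∧ z < e i.succ :=
    hgap _ (S.orderEmbOfFin_mem hk _) _ (S.orderEmbOfFin_mem hk _)
      (e.strictMono i.castSucc_lt_succ)
  choose r hrY hlt_r hr_lt using hgap'
  have hr_mono : StrictMono r := fun i j hij =>
    calc r i < e i.succ := hr_lt i
      _ ≤ e j.castSucc := e.monotone (Fin.succ_le_castSucc_iff.2 hij)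
      _ < r j := hlt_r j
  have hr_notMem (i : Fin k) : r i ∉ S := by
    intro hi
    obtain ⟨j, hj⟩ : r i ∈ Set.range e := by rwa [S.range_orderEmbOfFin hk]
    have h1 : i.castSucc < j := e.lt_iff_lt.1 (hj ▸ hlt_r i)
    have h2 : j < i.succ := e.lt_iff_lt.1 (hj ▸ hr_lt i)
    exact (Fin.castSucc_lt_iff_succ_le.1 h1).not_gt h2
  calc ((k + 1 : ℕ) : ℕ∞) = ENat.card (Fin k) + 1 := by simp
    _ ≤ (Set.range r).encard + 1 := by gcongr; exact hr_mono.injective.encard_range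
    _ ≤ (Y \ S).encard + 1 := by
        gcongr
        exact Set.range_subset_iff.2 fun i => ⟨hrY i, hr_notMem i⟩

theorem Finset.sum_le_encard_add_one {α : Type*} [LinearOrder α] (S : Finset α)
    (Y : Set α) (mult : α → ℕ)
    (hgap : ∀ x ∈ S, ∀ y ∈ S, x < y → ∃ z ∈ Y, x < z ∧ z < y)
    (hmult : ∀ t ∈ S, mult t ≤ 1 ∨ t ∈ Y ∧ mult t ≤ 2) :
    ((∑ t ∈ S, mult t : ℕ) : ℕ∞) ≤ Y.encard + 1 := by
  classical
  have hsum : ∑ t ∈ S, mult t ≤ S.card + (S.filter (· ∈ Y)).card := by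
    rw [Finset.card_eq_sum_ones, Finset.card_filter, ← Finset.sum_add_distrib]
    refine Finset.sum_le_sum fun t ht => ?_
    rcases hmult t ht with h | ⟨hY, h⟩ <;> split_ifs <;> omega
  have hinter : ((S.filter (· ∈ Y)).card : ℕ∞) = (Y ∩ S).encard := by
    rw [← encard_coe_eq_coe_finsetCard, Finset.coe_filter]
    congr 1; ext; simp [and_comm]
  calc ((∑ t ∈ S, mult t : ℕ) : ℕ∞) ≤ S.card + (S.filter (· ∈ Y)).card := by
        exact_mod_cast hsum
    _ ≤ (Y \ S).encard + 1 + (Y ∩ S).encard := by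
        rw [hinter]; gcongr; exact S.card_le_encard_sdiff_add_one Y hgap
    _ = Y.encard + 1 := by rw [add_right_comm, encard_sdiff_add_encard_inter]

theorem exists_mem_Ioo_derivWithin_Icc_eq_zero {f : ℝ → ℝ} {a b x y : ℝ}
    (hf : ContinuousOn f (Icc a b)) (hx : x ∈ Icc a b) (hy : y ∈ Icc a b) (hxy : x < y)
    (hfxy : f x = f y) : ∃ z ∈ Ioo x y, derivWithin f (Icc a b) z = 0 := by
  obtain ⟨z, hz, hz0⟩ := exists_deriv_eq_zero hxy (hf.mono (Icc_subset_Icc hx.1 hy.2)) hfxy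
  refine ⟨z, hz, ?_⟩
  rwa [derivWithin_of_mem_nhds (Icc_mem_nhds (hx.1.trans_lt hz.1) (hz.2.trans_le hy.2))]

theorem stmt_18_general (a b : ℝ) (m : ℕ) (f c h : ℝ → ℝ)
    (hfd : DifferentiableOn ℝ f (Icc a b))
    (hcpos : ∀ t ∈ Icc a b, 0 < c t)
    (hhz : {t ∈ Icc a b | h t = 0}.encard ≤ m)
    (hder : ∀ t ∈ Icc a b, derivWithin f (Icc a b) t = c t * h t) :
    ∀ (S : Finset ℝ) (mult : ℝ → ℕ),
      (∀ t ∈ S, t ∈ Icc a b ∧ f t = 0 ∧ 1 ≤ mult t ∧ mult t ≤ 2 ∧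
        (mult t = 2 → derivWithin f (Icc a b) t = 0)) →
      ∑ t ∈ S, mult t ≤ m + 1 := by
  intro S mult hS
  set Z := {t ∈ Icc a b | h t = 0}
  have hZ_of_derivWithin_eq_zero {t : ℝ} (ht : t ∈ Icc a b)
      (h0 : derivWithin f (Icc a b) t = 0) : t ∈ Z :=
    ⟨ht, (mul_eq_zero.1 ((hder t ht).symm.trans h0)).resolve_left (hcpos t ht).ne'⟩
  have hgap : ∀ x ∈ S, ∀ y ∈ S, x < y → ∃ z ∈ Z, x < z ∧ z < y := by
    intro x hx y hy hxy
    obtain ⟨hxab, hfx, -⟩ := hS x hx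
    obtain ⟨hyab, hfy, -⟩ := hS y hy
    obtain ⟨z, hz, hz0⟩ :=
      exists_mem_Ioo_derivWithin_Icc_eq_zero hfd.continuousOn hxab hyab hxy (hfx.trans hfy.symm)
    exact ⟨z, hZ_of_derivWithin_eq_zero ⟨hxab.1.trans hz.1.le, hz.2.le.trans hyab.2⟩ hz0, hz⟩
  have hmult : ∀ t ∈ S, mult t ≤ 1 ∨ t ∈ Z ∧ mult t ≤ 2 := by
    intro t ht
    obtain ⟨htab, -, -, hle, hdouble⟩ := hS t ht
    rcases hle.lt_or_eq with hlt | heq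
    · exact .inl (Nat.le_of_lt_succ hlt)
    · exact .inr ⟨hZ_of_derivWithin_eq_zero htab (hdouble heq), hle⟩
  have hbound : ((∑ t ∈ S, mult t : ℕ) : ℕ∞) ≤ m + 1 :=
    (S.sum_le_encard_add_one Z mult hgap hmult).trans (by gcongr)
  exact_mod_cast hbound

/-- Generalized Rolle-type bound: if `f' = c·h` with `c > 0` continuous and `h`
continuous with at most `m` zeros in `[a,b]`, then `f` has at most `m+1` zeros in
`[a,b]` counted with multiplicity (a double zero, `f(z) = f'(z) = 0`, counts
twice). -/
theorem stmt_18 (a b : ℝ) (hab : a < b) (m : ℕ) (f c h : ℝ → ℝ)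
    (hfd : DifferentiableOn ℝ f (Icc a b))
    (hcc : ContinuousOn c (Icc a b)) (hcpos : ∀ t ∈ Icc a b, 0 < c t)
    (hhc : ContinuousOn h (Icc a b))
    (hhz : {t ∈ Icc a b | h t = 0}.encard ≤ m)
    (hder : ∀ t ∈ Icc a b, derivWithin f (Icc a b) t = c t * h t) :
    ∀ (S : Finset ℝ) (mult : ℝ → ℕ),
      (∀ t ∈ S, t ∈ Icc a b ∧ f t = 0 ∧ 1 ≤ mult t ∧ mult t ≤ 2 ∧
        (mult t = 2 → derivWithin f (Icc a b) t = 0)) →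
      ∑ t ∈ S, mult t ≤ m + 1 :=
  stmt_18_general a b m f c h hfd hcpos hhz hder
end
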